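/- arXiv:2507.02722 — 3 statements merged into one kernel-verified Lean document; each statement's English description precedes it below -/
import Mathlib

section
/- Let $R$ be a commutative ring of prime characteristic $p$ and let $J \in M_n(R)$ be a matrix with $J^p = 0$. For $\lambda \in R$ define $E(\lambda) = \sum_{j=0}^{p-1} \binom{\lambda}{j} J^j$, where $\binom{\lambda}{j} = \lambda(\lambda-1)\cdots(\lambda-j+1)/j!$ is interpreted via the integer polynomial $\binom{X}{j}$ evaluated at $\lambda$. Then $E(\lambda)E(\mu) = E(\lambda + \mu)$ for all $\lambda, \mu \in R$, i.e., $E$ is a homomorphism from the additive group of $R$ to $GL_n(R)$. -/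
/-!
`E(λ)` is the truncation below degree `p` of the power series `(1 + X)^λ = ∑ binom(λ, j) X^j`,
evaluated at `J`. Since `J^p = 0`, evaluation at `J` only sees a polynomial modulo `X^p`, and
truncations below degree `p` multiply like the series themselves. So it suffices that the
coefficients of `(1 + X)^(λ+μ)` and `(1 + X)^λ (1 + X)^μ` agree below degree `p`. This is the
Chu–Vandermonde identity for descending Pochhammer symbols, divided by `m!`, which is a unit
for `m < p`.
-/

open Nat Finset Polynomial

section DescPochhammer

variable {R : Type*} [CommRing R]

theorem descPochhammer_int_smeval (k : ℕ) (r : R) :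
    (descPochhammer ℤ k).smeval r = (descPochhammer R k).eval r := by
  rw [← aeval_eq_smeval, aeval_def, ← eval_map, descPochhammer_map]

theorem add_factorial_mul_inverse_factorial_mul {i j : ℕ} (h : IsUnit ((i + j)! : R)) (a b : R) :
    ((i + j)! : R) * ((Ring.inverse (i ! : R) * a) * (Ring.inverse (j ! : R) * b))
      = (i + j).choose i * (a * b) := by
  have hi := Ring.mul_inverse_cancel _ (h.natCast_factorial_of_le (Nat.le_add_right i j))
  have hj := Ring.mul_inverse_cancel _ (h.natCast_factorial_of_le (Nat.le_add_left j i))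
  rw [← Nat.add_choose_mul_factorial_mul_factorial, ← Nat.choose_symm_add]
  push_cast
  linear_combination ((i + j).choose i * a * b * (j ! : R) * Ring.inverse (j ! : R)) * hi
    + ((i + j).choose i * a * b) * hj

variable (R) in
/-- The series `(1 + X)^r`, with `binom(r, j) = r(r-1)⋯(r-j+1) / j!`; its coefficients are junk
values once `j!` is not a unit. -/
noncomputable def descPochhammerEGF (r : R) : PowerSeries R :=
  PowerSeries.mk fun j => Ring.inverse (j ! : R) * (descPochhammer R j).eval r

theorem coeff_descPochhammerEGF_add {m : ℕ} (hm : IsUnit (m ! : R)) (r s : R) :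
    PowerSeries.coeff m (descPochhammerEGF R (r + s))
      = PowerSeries.coeff m (descPochhammerEGF R r * descPochhammerEGF R s) := by
  simp only [descPochhammerEGF, PowerSeries.coeff_mul, PowerSeries.coeff_mk]
  apply hm.mul_left_cancel
  rw [← mul_assoc, Ring.mul_inverse_cancel _ hm, one_mul, mul_sum, ← descPochhammer_int_smeval,
    Ring.descPochhammer_smeval_add m (Commute.all r s)]
  refine sum_congr rfl fun ij hij => ?_
  obtain rfl := mem_antidiagonal.mp hij
  rw [add_factorial_mul_inverse_factorial_mul hm, descPochhammer_int_smeval,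
    descPochhammer_int_smeval]

theorem trunc_descPochhammerEGF_add {p : ℕ} (hfac : IsUnit ((p - 1)! : R)) (r s : R) :
    PowerSeries.trunc p (descPochhammerEGF R (r + s))
      = PowerSeries.trunc p (descPochhammerEGF R r * descPochhammerEGF R s) := by
  ext m
  simp only [PowerSeries.coeff_trunc]
  split_ifs with hm
  · exact coeff_descPochhammerEGF_add (hfac.natCast_factorial_of_lt hm) r s
  · rfl

end DescPochhammer

section NilpotentEvaluation

variable {R A : Type*} [CommRing R] [Ring A] [Algebra R A] {x : A} {n : ℕ}

theorem aeval_trunc_eq_sum_range (f : PowerSeries R) :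
    aeval x (PowerSeries.trunc n f) = ∑ i ∈ range n, PowerSeries.coeff i f • x ^ i := by
  simp only [aeval_def, PowerSeries.eval₂_trunc_eq_sum_range, Algebra.smul_def]

theorem aeval_trunc_coe_of_pow_eq_zero (hx : x ^ n = 0) (q : R[X]) :
    aeval x (PowerSeries.trunc n (q : PowerSeries R)) = aeval x q := by
  obtain ⟨t, ht⟩ : X ^ n ∣ q - PowerSeries.trunc n (q : PowerSeries R) := by
    refine X_pow_dvd_iff.mpr fun d hd => ?_
    rw [coeff_sub, PowerSeries.coeff_trunc, if_pos hd, Polynomial.coeff_coe, sub_self]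
  conv_rhs => rw [sub_eq_iff_eq_add'.mp ht]
  rw [map_add, map_mul, map_pow, aeval_X, hx, zero_mul, add_zero]

theorem aeval_trunc_mul_of_pow_eq_zero (hx : x ^ n = 0) (f g : PowerSeries R) :
    aeval x (PowerSeries.trunc n f) * aeval x (PowerSeries.trunc n g)
      = aeval x (PowerSeries.trunc n (f * g)) := by
  rw [← map_mul, ← PowerSeries.trunc_trunc_mul_trunc, ← Polynomial.coe_mul,
    aeval_trunc_coe_of_pow_eq_zero hx]

end NilpotentEvaluation

/-- For a matrix `J` with `J^p = 0` over a commutative ring of characteristic `p`, the map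
`λ ↦ E(λ) = ∑_{j<p} binom(λ,j) J^j` (with `binom(λ,j) = λ(λ-1)⋯(λ-j+1)/j!`, the factorial
being invertible since `j < p`) is additive-to-multiplicative:
`E(λ)E(μ) = E(λ+μ)`. -/
theorem stmt5 (p : ℕ) (hp : p.Prime) (R : Type*) [CommRing R] [CharP R p]
    (n : Type*) [Fintype n] [DecidableEq n]
    (J : Matrix n n R) (hJ : J ^ p = 0) (lam mu : R) :
    (∑ j ∈ Finset.range p,
        (Ring.inverse ((j.factorial : R)) * (descPochhammer R j).eval lam) • J ^ j) *
      (∑ j ∈ Finset.range p,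
        (Ring.inverse ((j.factorial : R)) * (descPochhammer R j).eval mu) • J ^ j)
    = ∑ j ∈ Finset.range p,
        (Ring.inverse ((j.factorial : R)) * (descPochhammer R j).eval (lam + mu)) • J ^ j := by
  have : Fact p.Prime := ⟨hp⟩
  have hfac : IsUnit ((p - 1)! : R) :=
    (IsUnit.natCast_factorial_iff_of_charP p).mpr (Nat.sub_lt hp.pos one_pos)
  have hE (r : R) :
      ∑ j ∈ range p, (Ring.inverse (j ! : R) * (descPochhammer R j).eval r) • J ^ j
        = aeval J (PowerSeries.trunc p (descPochhammerEGF R r)) := by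
    simp only [aeval_trunc_eq_sum_range, descPochhammerEGF, PowerSeries.coeff_mk]
  rw [hE, hE, hE, aeval_trunc_mul_of_pow_eq_zero hJ, trunc_descPochhammerEGF_add hfac]
end

section
/- Let $G$ be a finite group, $k$ a field, and $W$ a finite-dimensional $kG$-module. Let $\mathcal{I}$ be a class of finite-dimensional $kG$-modules closed under direct sums, direct summands, and tensoring with arbitrary finite-dimensional modules. Let $\widetilde{\mathcal{T}}$ be the class of modules $X$ such that $W \otimes X \in \mathcal{I}$. If $W$ is self-dual (i.e., $W \cong W^*$), then $\widetilde{\mathcal{T}}$ is closed under tensor products: for $X, Y \in \widetilde{\mathcal{T}}$, also $X \otimes Y \in \widetilde{\mathcal{T}}$. -/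
open CategoryTheory MonoidalCategory Limits

noncomputable instance (k G : Type) [Field k] [Group G] :
    HasBinaryBiproducts (FDRep k G) :=
  HasBinaryBiproducts.of_hasBinaryProducts

open ZeroObject in
theorem mem_of_iso_of_forall_biprod_summand {C : Type*} [Category C] [HasZeroMorphisms C]
    [HasZeroObject C] [HasBinaryBiproducts C] {I : Set C}
    (hsummand : ∀ X Y Z : C, X ∈ I → Nonempty (X ≅ (Y ⊞ Z)) → Y ∈ I)
    {X Y : C} (e : X ≅ Y) (hX : X ∈ I) : Y ∈ I :=
  hsummand X Y 0 hX ⟨e ≪≫ isoBiprodZero (isZero_zero C)⟩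

theorem stmt11_general (k G : Type) [Field k] [Group G]
    (W : FDRep k G)
    (I : Set (FDRep k G))
    (hsummand : ∀ X Y Z : FDRep k G, X ∈ I → Nonempty (X ≅ (Y ⊞ Z)) → Y ∈ I)
    (htensor : ∀ X : FDRep k G, X ∈ I → ∀ Y : FDRep k G, (X ⊗ Y) ∈ I)
    (X Y : FDRep k G) (hX : (W ⊗ X) ∈ I) :
    (W ⊗ (X ⊗ Y)) ∈ I :=
  mem_of_iso_of_forall_biprod_summand hsummand (α_ W X Y) (htensor _ hX Y)

/-- If `W` is self-dual and `I` is a class of representations closed under direct sums,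
direct summands and tensoring with arbitrary objects, then the class
`T̃ = {X : W ⊗ X ∈ I}` is closed under tensor products. -/
theorem stmt11 (k G : Type) [Field k] [Group G] [Fintype G]
    (W : FDRep k G) (hW : Nonempty (W ≅ Wᘁ))
    (I : Set (FDRep k G))
    (hsum : ∀ X Y : FDRep k G, X ∈ I → Y ∈ I → (X ⊞ Y) ∈ I)
    (hsummand : ∀ X Y Z : FDRep k G, X ∈ I → Nonempty (X ≅ (Y ⊞ Z)) → Y ∈ I)
    (htensor : ∀ X : FDRep k G, X ∈ I → ∀ Y : FDRep k G, (X ⊗ Y) ∈ I)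
    (X Y : FDRep k G) (hX : (W ⊗ X) ∈ I) (hY : (W ⊗ Y) ∈ I) :
    (W ⊗ (X ⊗ Y)) ∈ I :=
  stmt11_general k G W I hsummand htensor X Y hX
end

section
/- Let $k$ be an algebraically closed field of characteristic $3$, fix $\lambda \in k \setminus \mathbb{F}_3$, and set $\tilde{\lambda} = \lambda - \lambda^2$. For $\mu \in k$, let $S(\mu)$ be the $3$-dimensional module over $E = C_3^2$ (with $X_i = g_i - 1$) on which $X_1$ acts by the nilpotent Jordan block $\mathbb{J}$ (with $\mathbb{J}^3 = 0$) and $X_2$ acts by $\lambda \mathbb{J} + (\tilde{\lambda} + \mu)\mathbb{J}^2$. Then the dual module satisfies $S(\mu)^* \cong S(-\mu)$. -/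
/-!
Both generators act on `S(μ)` by elements `1 + aJ + bJ²` of the truncated polynomial ring
`k[J]`, `J³ = 0`, and the dual action inverts and transposes them. The inverse of
`1 + aJ + bJ²` is `1 - aJ + (a² - b)J²`; the reversal matrix `W` conjugates `Jᵀ` back to `J`;
and the substitution `J ↦ -J + J²`, an automorphism of `k[J]` whose matrix `Φ` on the basis
`e₁ = 1, e₂ = J, e₃ = J²` intertwines `J` with `-J + J²`, turns `1 - aJ + cJ²` into
`1 + aJ + (c - a)J²`. Hence `Φ W` carries the dual of `1 + aJ + bJ²` to
`1 + aJ + (a² - a - b)J²`. For `(a, b) = (1, 0)` this is `1 + J` again, and for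
`(a, b) = (λ, λ - λ² + μ)` it is `1 + λJ + (2λ² - 2λ - μ)J²`, which in characteristic `3` is
the second generator of `S(-μ)`.
-/

open Matrix

noncomputable section

def Jmat (k : Type) [Field k] : Matrix (Fin 3) (Fin 3) k :=
  Matrix.of fun i j => if (i : ℕ) = (j : ℕ) + 1 then 1 else 0

/-- The matrices by which the generators `g₁, g₂` of `C₃²` act on `S(μ)`:
`g₁ ↦ 1 + J` and `g₂ ↦ 1 + λJ + (λ̃ + μ)J²` where `λ̃ = λ - λ²`. -/
def Smats (k : Type) [Field k] (lam mu : k) : Fin 2 → Matrix (Fin 3) (Fin 3) k :=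
  ![1 + Jmat k, 1 + lam • Jmat k + (lam - lam ^ 2 + mu) • (Jmat k) ^ 2]

theorem mul_pow_two_eq_zero_of_pow_three_eq_zero {M : Type*} [MonoidWithZero M] {N : M}
    (hN : N ^ 3 = 0) : N * N ^ 2 = 0 ∧ N ^ 2 * N = 0 ∧ N ^ 2 * N ^ 2 = 0 :=
  ⟨by rw [← pow_succ', hN], by rw [← pow_succ, hN],
    by rw [← pow_add]; exact pow_eq_zero_of_le (by norm_num) hN⟩

section QuadUnipotent

variable {R A : Type*} [CommRing R] [Ring A] [Algebra R A]

def quadUnipotent (N : A) (a b : R) : A := 1 + a • N + b • N ^ 2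

theorem quadUnipotent_mul_quadUnipotent_neg {N : A} (hN : N ^ 3 = 0) (a b : R) :
    quadUnipotent N a b * quadUnipotent N (-a) (a ^ 2 - b) = 1 := by
  obtain ⟨h12, h21, h22⟩ := mul_pow_two_eq_zero_of_pow_three_eq_zero hN
  simp only [quadUnipotent, add_mul, mul_add, one_mul, mul_one, smul_mul_smul_comm, ← sq N,
    h12, h21, h22, smul_zero]
  module

theorem SemiconjBy.quadUnipotent {Φ N M : A} (h : SemiconjBy Φ N M) (a b : R) :
    SemiconjBy Φ (quadUnipotent N a b) (quadUnipotent M a b) :=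
  ((one_right Φ).add_right (h.smul_right a)).add_right ((h.pow_right 2).smul_right b)

theorem quadUnipotent_neg_add_sq {N : A} (hN : N ^ 3 = 0) (a b : R) :
    quadUnipotent (-N + N ^ 2) a b = quadUnipotent N (-a) (a + b) := by
  obtain ⟨h12, h21, h22⟩ := mul_pow_two_eq_zero_of_pow_three_eq_zero hN
  have hsq : (-N + N ^ 2) ^ 2 = N ^ 2 := by
    simp only [sq (-N + N ^ 2), add_mul, mul_add, neg_mul, mul_neg, ← sq N, h12, h21, h22]
    abel
  simp only [quadUnipotent, hsq]
  module

end QuadUnipotent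

theorem Matrix.transpose_quadUnipotent {n k : Type*} [Fintype n] [DecidableEq n] [CommRing k]
    (N : Matrix n n k) (a b : k) : (quadUnipotent N a b)ᵀ = quadUnipotent Nᵀ a b := by
  simp [quadUnipotent, transpose_pow]

theorem Matrix.inv_quadUnipotent {n k : Type*} [Fintype n] [DecidableEq n] [CommRing k]
    {N : Matrix n n k} (hN : N ^ 3 = 0) (a b : k) :
    (quadUnipotent N a b)⁻¹ = quadUnipotent N (-a) (a ^ 2 - b) :=
  inv_eq_right_inv (quadUnipotent_mul_quadUnipotent_neg hN a b)

section Jmat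

variable (k : Type) [Field k]

theorem Jmat_eq : Jmat k = !![0, 0, 0; 1, 0, 0; 0, 1, 0] := by
  ext i j
  fin_cases i <;> fin_cases j <;> rfl

theorem Jmat_pow_three : Jmat k ^ 3 = 0 := by
  rw [Jmat_eq]
  ext i j
  fin_cases i <;> fin_cases j <;> simp [pow_succ, mul_apply, Fin.sum_univ_three]

theorem semiconjBy_reversal_transpose_Jmat :
    SemiconjBy !![0, 0, 1; 0, 1, 0; 1, 0, 0] (Jmat k)ᵀ (Jmat k) := by
  rw [SemiconjBy, Jmat_eq]
  ext i j
  fin_cases i <;> fin_cases j <;> simp [mul_apply, Fin.sum_univ_three]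

theorem semiconjBy_Jmat_neg_add_sq :
    SemiconjBy !![1, 0, 0; 0, -1, 0; 0, 1, 1] (Jmat k) (-Jmat k + Jmat k ^ 2) := by
  rw [SemiconjBy, Jmat_eq]
  ext i j
  fin_cases i <;> fin_cases j <;> simp [sq, mul_apply, Fin.sum_univ_three]

def dualIntertwiner : Matrix (Fin 3) (Fin 3) k :=
  !![1, 0, 0; 0, -1, 0; 0, 1, 1] * !![0, 0, 1; 0, 1, 0; 1, 0, 0]

theorem isUnit_det_dualIntertwiner : IsUnit (dualIntertwiner k).det := by
  simp [dualIntertwiner, det_fin_three]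

theorem semiconjBy_dualIntertwiner_transpose_inv_quadUnipotent (a b : k) :
    SemiconjBy (dualIntertwiner k)
      (quadUnipotent (Jmat k) a b)⁻¹ᵀ (quadUnipotent (Jmat k) a (a ^ 2 - a - b)) := by
  have hsubst := (semiconjBy_Jmat_neg_add_sq k).quadUnipotent (-a) (a ^ 2 - b)
  rw [quadUnipotent_neg_add_sq (Jmat_pow_three k), neg_neg,
    show -a + (a ^ 2 - b) = a ^ 2 - a - b by ring] at hsubst
  rw [inv_quadUnipotent (Jmat_pow_three k), transpose_quadUnipotent]
  exact hsubst.mul_left ((semiconjBy_reversal_transpose_Jmat k).quadUnipotent _ _)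

theorem Smats_zero (lam mu : k) : Smats k lam mu 0 = quadUnipotent (Jmat k) (1 : k) 0 := by
  simp [Smats, quadUnipotent]

theorem Smats_one (lam mu : k) :
    Smats k lam mu 1 = quadUnipotent (Jmat k) lam (lam - lam ^ 2 + mu) :=
  rfl

end Jmat

theorem stmt14_general (k : Type) [Field k] [CharP k 3]
    (lam : k) (mu : k) :
    ∃ P : Matrix (Fin 3) (Fin 3) k, IsUnit P.det ∧
      ∀ i : Fin 2, P * ((Smats k lam mu i)⁻¹)ᵀ = Smats k lam (-mu) i * P := by
  refine ⟨dualIntertwiner k, isUnit_det_dualIntertwiner k, Fin.forall_fin_two.2 ⟨?_, ?_⟩⟩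
  · have h := semiconjBy_dualIntertwiner_transpose_inv_quadUnipotent k 1 0
    rw [show (1 : k) ^ 2 - 1 - 0 = 0 by ring] at h
    rw [Smats_zero, Smats_zero]
    exact h
  · have h3 : (3 : k) = 0 := by exact_mod_cast CharP.cast_eq_zero k 3
    rw [Smats_one, Smats_one,
      show lam - lam ^ 2 + -mu = lam ^ 2 - lam - (lam - lam ^ 2 + mu) by
        linear_combination (lam - lam ^ 2) * h3]
    exact semiconjBy_dualIntertwiner_transpose_inv_quadUnipotent k lam _

/-- The dual of the `C₃²`-module `S(μ)` is isomorphic to `S(-μ)`: there is an invertible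
matrix `P` intertwining the dual action (in which a generator `g` acts by the transpose of
the inverse of its action on `S(μ)`) with the action on `S(-μ)`. -/
theorem stmt14 (k : Type) [Field k] [IsAlgClosed k] [CharP k 3]
    (lam : k) (hlam : ∀ c : ZMod 3, (ZMod.castHom (dvd_refl 3) k) c ≠ lam) (mu : k) :
    ∃ P : Matrix (Fin 3) (Fin 3) k, IsUnit P.det ∧
      ∀ i : Fin 2, P * ((Smats k lam mu i)⁻¹)ᵀ = Smats k lam (-mu) i * P :=
  stmt14_general k lam mu
end
end
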